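/- With notation as in the context: M is the core of C in A (the largest normal subgroup of A contained in C), M is isomorphic to the direct power K_λ^{|Δ|·m}, and the action of A on the right cosets of C in A is permutation isomorphic to the action of L on Λ. -/

import Mathlib

open MulAction

section DeltaAction

variable {Λ L : Type} [Group L] [MulAction L Λ] (K : Subgroup L) [K.Normal]

/-- The action of `L` on the set `Δ` of orbits of a normal subgroup `K` on `Λ`. -/
def deltaSmul (g : L) (q : orbitRel.Quotient K Λ) : orbitRel.Quotient K Λ :=
  Quotient.map' (fun x => g • x) (by
    rintro a b ⟨k, hk⟩
    refine ⟨⟨g * k * g⁻¹, Subgroup.Normal.conj_mem ‹K.Normal› (k : L) k.2 g⟩, ?_⟩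
    show (g * (k : L) * g⁻¹) • (g • b) = g • a
    have hk' : (k : L) • b = a := hk
    rw [← hk', smul_smul, smul_smul]
    congr 1
    group) q

lemma deltaSmul_mk (g : L) (a : Λ) :
    deltaSmul K g (Quotient.mk'' a) = (Quotient.mk'' (g • a) : orbitRel.Quotient K Λ) := rfl

/-- `L` acts on the set of orbits of a normal subgroup `K`. -/
instance deltaAction : MulAction L (orbitRel.Quotient K Λ) where
  smul := deltaSmul K
  one_smul q := Quotient.inductionOn' q fun a => by
    show deltaSmul K 1 (Quotient.mk'' a) = Quotient.mk'' a
    rw [deltaSmul_mk, one_smul]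
  mul_smul g h q := Quotient.inductionOn' q fun a => by
    show deltaSmul K (g * h) (Quotient.mk'' a) = deltaSmul K g (deltaSmul K h (Quotient.mk'' a))
    rw [deltaSmul_mk, deltaSmul_mk, deltaSmul_mk, mul_smul]

end DeltaAction

section Ctx

variable (Λ L : Type) [Group L] [MulAction L Λ] (K : Subgroup L) [K.Normal]

/-- The homomorphism from `L` to the symmetric group of the orbit set `Δ`. -/
def rhoHom : L →* Equiv.Perm (orbitRel.Quotient K Λ) :=
  MulAction.toPermHom L (orbitRel.Quotient K Λ)

/-- `S`, the permutation group induced by `L` on the orbit set `Δ`. -/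
def Sgrp : Subgroup (Equiv.Perm (orbitRel.Quotient K Λ)) := (rhoHom Λ L K).range

/-- The natural projection `π : L → S`. -/
def piHom : L →* ↥(Sgrp Λ L K) := (rhoHom Λ L K).rangeRestrict

variable (lam : Λ)

/-- The orbit `δ ∈ Δ` of the point `λ`. -/
def deltaPt : orbitRel.Quotient K Λ := Quotient.mk'' lam

/-- The stabiliser `S_δ` of `δ` in `S`. -/
def Sdel : Subgroup ↥(Sgrp Λ L K) := stabilizer ↥(Sgrp Λ L K) (deltaPt Λ L K lam)

/-- The point stabiliser `L_λ`. -/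
def Llam : Subgroup L := stabilizer L lam

/-- `K_λ`, the stabiliser of `λ` in `K`. -/
def Klam : Subgroup L := K ⊓ stabilizer L lam

end Ctx

section Wr

variable {G H : Type*} [Group G] [Group H]

/-- The underlying type of the twisted product `(H → G)^m ⋊ G` used in the construction:
elements are tuples `(g, f₁, …, f_m)` with `g ∈ G` and `f_i : H → G`, multiplied by
`(g, f₁, …, f_m)(g', h₁, …, h_m) = (g g', f₁^{g'} h₁, …, f_m^{g'} h_m)`, where
`f^{g'}(x) = f(x · (p g')⁻¹)`. -/
@[ext]
structure Wr (p : G →* H) (m : ℕ) where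
  fst : G
  snd : Fin m → H → G

namespace Wr

variable {p : G →* H} {m : ℕ}

instance : One (Wr p m) := ⟨⟨1, fun _ _ => 1⟩⟩
instance : Mul (Wr p m) :=
  ⟨fun a b => ⟨a.fst * b.fst, fun i x => a.snd i (x * (p b.fst)⁻¹) * b.snd i x⟩⟩
instance : Inv (Wr p m) := ⟨fun a => ⟨a.fst⁻¹, fun i x => (a.snd i (x * p a.fst))⁻¹⟩⟩

@[simp] lemma one_fst : (1 : Wr p m).fst = 1 := rfl
@[simp] lemma one_snd (i : Fin m) (x : H) : (1 : Wr p m).snd i x = 1 := rfl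
@[simp] lemma mul_fst (a b : Wr p m) : (a * b).fst = a.fst * b.fst := rfl
@[simp] lemma mul_snd (a b : Wr p m) (i : Fin m) (x : H) :
    (a * b).snd i x = a.snd i (x * (p b.fst)⁻¹) * b.snd i x := rfl
@[simp] lemma inv_fst (a : Wr p m) : (a⁻¹).fst = a.fst⁻¹ := rfl
@[simp] lemma inv_snd (a : Wr p m) (i : Fin m) (x : H) :
    (a⁻¹).snd i x = (a.snd i (x * p a.fst))⁻¹ := rfl

instance : Group (Wr p m) where
  mul_assoc a b c := by
    refine Wr.ext (mul_assoc ..) ?_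
    funext i x
    simp [mul_assoc]
  one_mul a := by
    refine Wr.ext (one_mul _) ?_
    funext i x
    simp
  mul_one a := by
    refine Wr.ext (mul_one _) ?_
    funext i x
    simp
  inv_mul_cancel a := by
    refine Wr.ext (inv_mul_cancel _) ?_
    funext i x
    simp

end Wr

end Wr

/-- The projection `(g, f₁, …, f_m) ↦ g`. -/
def Wr.fstHom {G H : Type*} [Group G] [Group H] (p : G →* H) (m : ℕ) : Wr p m →* G where
  toFun := Wr.fst
  map_one' := rfl
  map_mul' := fun _ _ => rfl

section ASubgroup

open MulAction

variable (Λ L : Type) [Fintype Λ] [Group L] [Finite L] [MulAction L Λ]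
  (K : Subgroup L) [K.Normal] (lam : Λ)
  (τ : ↥(Sgrp Λ L K) → ↥(Sgrp Λ L K)) (m : ℕ)

/-- The subgroup `Ω^m ⋊ L` inside the twisted product: the tuples `(g, f₁, …, f_m)` where
each `f_i` lies in `Ω`, i.e. takes values in `L_λ` and is constant on the right cosets of
`S_δ` in `S`. -/
def OmegaML : Subgroup (Wr (piHom Λ L K) m) where
  carrier := {w | ∀ i, (∀ x, w.snd i x ∈ stabilizer L lam) ∧
    ∀ y ∈ Sdel Λ L K lam, ∀ x, w.snd i (y * x) = w.snd i x}
  one_mem' := fun i => ⟨fun x => Subgroup.one_mem _, fun y hy x => rfl⟩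
  mul_mem' := by
    rintro a b ha hb
    refine fun i => ⟨fun x => ?_, fun y hy x => ?_⟩
    · simp only [Wr.mul_snd]
      exact mul_mem ((ha i).1 _) ((hb i).1 x)
    · simp only [Wr.mul_snd]
      rw [mul_assoc, (ha i).2 y hy, (hb i).2 y hy]
  inv_mem' := by
    rintro a ha
    refine fun i => ⟨fun x => ?_, fun y hy x => ?_⟩
    · simp only [Wr.inv_snd]
      exact inv_mem ((ha i).1 _)
    · simp only [Wr.inv_snd]
      rw [mul_assoc, (ha i).2 y hy]

/-- The set `A`: tuples `(g, f₁, …, f_m)` with `g ∈ L`, each `f_i ∈ Ω`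
(i.e. `f_i` takes values in `L_λ` and is constant on right cosets of `S_δ`), and
`(f_i(x))^π = (x (g^π)⁻¹)^τ · g^π · (x^τ)⁻¹` for all `x ∈ S`. -/
def Aset : Set (Wr (piHom Λ L K) m) :=
  {w | (∀ i x, w.snd i x ∈ stabilizer L lam) ∧
    (∀ i, ∀ y ∈ Sdel Λ L K lam, ∀ x, w.snd i (y * x) = w.snd i x) ∧
    (∀ i x, piHom Λ L K (w.snd i x) =
      τ (x * (piHom Λ L K w.fst)⁻¹) * piHom Λ L K w.fst * (τ x)⁻¹)}

/-- `A` as a subgroup of `Ω^m ⋊ L`. -/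
def Asub : Subgroup (Wr (piHom Λ L K) m) where
  carrier := Aset Λ L K lam τ m
  one_mem' := by
    refine ⟨fun i x => ?_, fun i y hy x => rfl, fun i x => ?_⟩
    · simp only [Wr.one_snd]
      exact Subgroup.one_mem _
    · simp
  mul_mem' := by
    rintro a b ⟨ha1, ha2, ha3⟩ ⟨hb1, hb2, hb3⟩
    refine ⟨fun i x => ?_, fun i y hy x => ?_, fun i x => ?_⟩
    · simp only [Wr.mul_snd]
      exact mul_mem (ha1 i _) (hb1 i x)
    · simp only [Wr.mul_snd]
      rw [mul_assoc, ha2 i y hy, hb2 i y hy]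
    · simp only [Wr.mul_snd, Wr.mul_fst, map_mul]
      rw [ha3 i, hb3 i,
        show x * (piHom Λ L K a.fst * piHom Λ L K b.fst)⁻¹ =
          x * (piHom Λ L K b.fst)⁻¹ * (piHom Λ L K a.fst)⁻¹ from by
            rw [mul_inv_rev, ← mul_assoc]]
      group
  inv_mem' := by
    rintro a ⟨h1, h2, h3⟩
    refine ⟨fun i x => ?_, fun i y hy x => ?_, fun i x => ?_⟩
    · simp only [Wr.inv_snd]
      exact inv_mem (h1 i _)
    · simp only [Wr.inv_snd]
      rw [mul_assoc, h2 i y hy]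
    · simp only [Wr.inv_snd, Wr.inv_fst, map_inv]
      rw [h3 i (x * piHom Λ L K a.fst), mul_inv_cancel_right, inv_inv]
      group

/-- The subgroup `C = {(g, f₁, …, f_m) ∈ A | g ∈ L_λ}` of `A`. -/
def Csub : Subgroup (Wr (piHom Λ L K) m) :=
  Asub Λ L K lam τ m ⊓ Subgroup.comap (Wr.fstHom (piHom Λ L K) m) (stabilizer L lam)

end ASubgroup

/-!
The projection `φ : A → L` is onto. Given `g ∈ L` and `x ∈ S`, the element
`(x (g^π)⁻¹)^τ g^π (x^τ)⁻¹` lies in `S_δ`, and every element of `S_δ` lifts to `L_λ` because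
`K` acts trivially on `Δ`; taking such lifts as the values `f_i(x)` gives a preimage of `g`.
So `A` acts on `Λ` through `φ`, transitively and with point stabiliser `C = φ⁻¹(L_λ)`; the core
of `C` is `φ⁻¹` of the core of `L_λ`, which is trivial since `L` is faithful and transitive.
An element of `M` has `g = 1`, so its coordinates `f_i` take values in `ker π ∩ L_λ = K_λ`; being
constant on right cosets of `S_δ`, each is determined by its values on `T`, and `T` is in
bijection with `Δ` through `t ↦ δ^{t⁻¹}`.
-/

section CosetAction

variable {A L Λ : Type*} [Group A] [Group L] [MulAction L Λ]

theorem Subgroup.normalCore_comap_of_surjective {φ : A →* L} (hφ : Function.Surjective φ)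
    (H : Subgroup L) : (H.comap φ).normalCore = H.normalCore.comap φ := by
  ext a
  show (∀ b, φ (b * a * b⁻¹) ∈ H) ↔ ∀ g, g * φ a * g⁻¹ ∈ H
  simp only [map_mul, map_inv]
  exact (hφ.forall (p := fun g => g * φ a * g⁻¹ ∈ H)).symm

theorem MulAction.normalCore_stabilizer_eq_bot [FaithfulSMul L Λ] [IsPretransitive L Λ]
    (lam : Λ) : (stabilizer L lam).normalCore = ⊥ := by
  refine (Subgroup.eq_bot_iff_forall _).2 fun a ha =>
    FaithfulSMul.eq_of_smul_eq_smul (α := Λ) fun μ => ?_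
  obtain ⟨g, rfl⟩ := exists_smul_eq L lam μ
  have hconj : g⁻¹ * a * g⁻¹⁻¹ ∈ stabilizer L lam := ha g⁻¹
  rw [mem_stabilizer_iff, inv_inv, mul_smul, mul_smul, inv_smul_eq_iff] at hconj
  rw [hconj, one_smul]

theorem MonoidHom.ker_eq_normalCore_comap_stabilizer [FaithfulSMul L Λ] [IsPretransitive L Λ]
    {φ : A →* L} (hφ : Function.Surjective φ) (lam : Λ) :
    φ.ker = ((stabilizer L lam).comap φ).normalCore := by
  rw [Subgroup.normalCore_comap_of_surjective hφ, normalCore_stabilizer_eq_bot,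
    MonoidHom.comap_bot]

theorem exists_equiv_quotient_comap_stabilizer [IsPretransitive L Λ] {φ : A →* L}
    (hφ : Function.Surjective φ) (lam : Λ) :
    ∃ e : A ⧸ (stabilizer L lam).comap φ ≃ Λ, ∀ (a : A) (x : A ⧸ (stabilizer L lam).comap φ),
      e (a • x) = φ a • e x := by
  have smul_eq_iff (a b : A) :
      φ a • lam = φ b • lam ↔ (a : A ⧸ (stabilizer L lam).comap φ) = b := by
    rw [QuotientGroup.eq, Subgroup.mem_comap, mem_stabilizer_iff, map_mul, map_inv, mul_smul,
      inv_smul_eq_iff, eq_comm]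
  let e : A ⧸ (stabilizer L lam).comap φ → Λ :=
    Quotient.lift (fun a => φ a • lam) fun a b h => (smul_eq_iff a b).2 (Quotient.sound h)
  refine ⟨Equiv.ofBijective e ⟨?_, ?_⟩, ?_⟩
  · rintro ⟨a⟩ ⟨b⟩ h
    exact (smul_eq_iff a b).1 h
  · intro μ
    obtain ⟨g, rfl⟩ := exists_smul_eq L lam μ
    obtain ⟨a, rfl⟩ := hφ g
    exact ⟨a, rfl⟩
  · rintro a ⟨b⟩
    exact (congrArg (· • lam) (map_mul φ a b)).trans (mul_smul _ _ _)

end CosetAction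

section RightTransversal

variable {G : Type*} [Group G] {H : Subgroup G} {T : Set G} {τ : G → G}

theorem tau_eq_self_of_mem (hτuniq : ∀ s t, t ∈ T → s * t⁻¹ ∈ H → t = τ s) {t : G}
    (ht : t ∈ T) : τ t = t :=
  (hτuniq t t ht (by simp)).symm

theorem tau_mul_of_mem (hτT : ∀ s, τ s ∈ T) (hτcoset : ∀ s, s * (τ s)⁻¹ ∈ H)
    (hτuniq : ∀ s t, t ∈ T → s * t⁻¹ ∈ H → t = τ s) {y : G} (hy : y ∈ H) (x : G) :
    τ (y * x) = τ x :=
  (hτuniq (y * x) (τ x) (hτT x) (by rw [mul_assoc]; exact mul_mem hy (hτcoset x))).symm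

theorem tau_mul_inv_mul_mul_tau_inv_mem (hτcoset : ∀ s, s * (τ s)⁻¹ ∈ H) (x g : G) :
    τ (x * g⁻¹) * g * (τ x)⁻¹ ∈ H := by
  convert mul_mem (inv_mem (hτcoset (x * g⁻¹))) (hτcoset x) using 1
  group

theorem MulAction.card_eq_of_transversal_stabilizer {X : Type*} [MulAction G X]
    [IsPretransitive G X] {x : X} (hτT : ∀ s, τ s ∈ T)
    (hτcoset : ∀ s, s * (τ s)⁻¹ ∈ stabilizer G x)
    (hτuniq : ∀ s t, t ∈ T → s * t⁻¹ ∈ stabilizer G x → t = τ s) :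
    Nat.card T = Nat.card X := by
  refine Nat.card_congr (Equiv.ofBijective (fun t : T => (t : G)⁻¹ • x) ⟨?_, ?_⟩)
  · rintro ⟨t₁, ht₁⟩ ⟨t₂, ht₂⟩ (h : t₁⁻¹ • x = t₂⁻¹ • x)
    have hmem : t₁ * t₂⁻¹ ∈ stabilizer G x := by
      rw [mem_stabilizer_iff, mul_smul, ← h, smul_inv_smul]
    exact Subtype.ext ((tau_eq_self_of_mem hτuniq ht₁).symm.trans (hτuniq t₁ t₂ ht₂ hmem).symm)
  · intro y
    obtain ⟨g, rfl⟩ := exists_smul_eq G x y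
    refine ⟨⟨τ g⁻¹, hτT g⁻¹⟩, ?_⟩
    have hstab : (g⁻¹ * (τ g⁻¹)⁻¹) • x = x := hτcoset g⁻¹
    rw [mul_smul, inv_smul_eq_iff] at hstab
    exact hstab

end RightTransversal

section OrbitAction

variable (Λ L : Type) [Group L] [MulAction L Λ] (K : Subgroup L) [K.Normal]

theorem piHom_smul (g : L) (q : orbitRel.Quotient K Λ) : piHom Λ L K g • q = g • q := rfl

theorem le_ker_piHom : K ≤ (piHom Λ L K).ker := by
  intro k hk
  refine MonoidHom.mem_ker.2 (Subtype.ext (Equiv.ext fun q => ?_))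
  induction q using Quotient.inductionOn' with
  | h a => exact Quotient.sound' ⟨⟨k, hk⟩, rfl⟩

theorem ker_piHom (hker : (rhoHom Λ L K).ker = K) : (piHom Λ L K).ker = K :=
  (MonoidHom.ker_rangeRestrict _).trans hker

theorem isPretransitive_Sgrp [IsPretransitive L Λ] :
    IsPretransitive (Sgrp Λ L K) (orbitRel.Quotient K Λ) :=
  have : IsPretransitive L (orbitRel.Quotient K Λ) :=
    ⟨fun q r => Quotient.inductionOn₂' q r fun a b =>
      (exists_smul_eq L a b).imp fun _ h => congrArg Quotient.mk'' h⟩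
  IsPretransitive.of_smul_eq (piHom Λ L K) (piHom_smul Λ L K _ _)

theorem exists_mem_stabilizer_piHom_eq (lam : Λ) {s : Sgrp Λ L K} (hs : s ∈ Sdel Λ L K lam) :
    ∃ g ∈ stabilizer L lam, piHom Λ L K g = s := by
  obtain ⟨g, rfl⟩ : ∃ g, piHom Λ L K g = s := (rhoHom Λ L K).rangeRestrict_surjective s
  have horbit : g • lam ∈ orbit K lam := by
    rw [← orbitRel_apply]
    exact Quotient.exact' (mem_stabilizer_iff.1 hs)
  obtain ⟨k, hk⟩ := horbit
  refine ⟨(k : L)⁻¹ * g, ?_, ?_⟩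
  · rw [mem_stabilizer_iff, mul_smul, inv_smul_eq_iff]
    exact hk.symm
  · rw [map_mul, map_inv, le_ker_piHom Λ L K k.2, inv_one, one_mul]

end OrbitAction

section AProjection

variable (Λ L : Type) [Group L] [MulAction L Λ] (K : Subgroup L)
  [K.Normal] (lam : Λ) {T : Set (Sgrp Λ L K)} (τ : Sgrp Λ L K → Sgrp Λ L K) (m : ℕ)

abbrev Asub.fstHom : Asub Λ L K lam τ m →* L :=
  (Wr.fstHom (piHom Λ L K) m).comp (Asub Λ L K lam τ m).subtype

variable (hτT : ∀ s, τ s ∈ T) (hτcoset : ∀ s, s * (τ s)⁻¹ ∈ Sdel Λ L K lam)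
  (hτuniq : ∀ s t, t ∈ T → s * t⁻¹ ∈ Sdel Λ L K lam → t = τ s)

include hτT hτcoset hτuniq in
theorem Asub.fstHom_surjective : Function.Surjective (Asub.fstHom Λ L K lam τ m) := by
  intro g
  choose u hu_mem hu_piHom using fun σ : Sdel Λ L K lam =>
    exists_mem_stabilizer_piHom_eq Λ L K lam σ.2
  let σ (x : Sgrp Λ L K) : Sdel Λ L K lam :=
    ⟨τ (x * (piHom Λ L K g)⁻¹) * piHom Λ L K g * (τ x)⁻¹,
      tau_mul_inv_mul_mul_tau_inv_mem hτcoset x _⟩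
  refine ⟨⟨⟨g, fun _ x => u (σ x)⟩, fun _ _ => hu_mem _, fun _ y hy x => ?_,
    fun _ x => hu_piHom (σ x)⟩, rfl⟩
  simp only [σ, mul_assoc, tau_mul_of_mem hτT hτcoset hτuniq hy]

theorem Asub.snd_mem_of_fst_eq_one (hker : (rhoHom Λ L K).ker = K) {w : Wr (piHom Λ L K) m}
    (hw : w ∈ Asub Λ L K lam τ m) (h1 : w.fst = 1) (i : Fin m) (x : Sgrp Λ L K) :
    w.snd i x ∈ K ⊓ stabilizer L lam := by
  refine ⟨(ker_piHom Λ L K hker).le (MonoidHom.mem_ker.2 ?_), hw.1 i x⟩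
  rw [hw.2.2 i x, h1]
  simp

include hτcoset in
theorem Asub.snd_tau {w : Wr (piHom Λ L K) m} (hw : w ∈ Asub Λ L K lam τ m) (i : Fin m)
    (x : Sgrp Λ L K) : w.snd i (τ x) = w.snd i x := by
  conv_rhs => rw [← inv_mul_cancel_right x (τ x)]
  exact (hw.2.1 i _ (hτcoset x) _).symm

include hτT hτcoset hτuniq in
theorem Asub.mk_one_mem (F : Fin m × T → ↥(K ⊓ stabilizer L lam)) :
    (⟨1, fun i x => F (i, ⟨τ x, hτT x⟩)⟩ : Wr (piHom Λ L K) m) ∈ Asub Λ L K lam τ m := by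
  refine ⟨fun i x => (F _).2.2, fun i y hy x => ?_, fun i x => ?_⟩
  · simp only [tau_mul_of_mem hτT hτcoset hτuniq hy]
  · rw [le_ker_piHom Λ L K (F _).2.1]
    simp

noncomputable def Asub.kerMulEquiv (hker : (rhoHom Λ L K).ker = K) :
    (Asub.fstHom Λ L K lam τ m).ker ≃* (Fin m × T → ↥(K ⊓ stabilizer L lam)) where
  toFun a it := ⟨a.1.1.snd it.1 it.2, snd_mem_of_fst_eq_one Λ L K lam τ m hker a.1.2 a.2 _ _⟩
  invFun F := ⟨⟨_, mk_one_mem Λ L K lam τ m hτT hτcoset hτuniq F⟩, rfl⟩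
  left_inv a := by
    refine Subtype.ext (Subtype.ext (Wr.ext a.2.symm ?_))
    funext i x
    exact snd_tau Λ L K lam τ m hτcoset a.1.2 i x
  right_inv F := by
    funext ⟨i, t, ht⟩
    exact congrArg (fun t => F (i, t)) (Subtype.ext (tau_eq_self_of_mem hτuniq ht))
  map_mul' a b := by
    funext it
    refine Subtype.ext ?_
    show a.1.1.snd it.1 (it.2 * (piHom Λ L K b.1.1.fst)⁻¹) * b.1.1.snd it.1 it.2 = _
    rw [show b.1.1.fst = 1 from b.2, map_one, inv_one, mul_one]
    rfl

end AProjection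

theorem kernel_is_core_and_coset_action_general (Λ L : Type) [Fintype Λ] [Group L]
    [MulAction L Λ] [FaithfulSMul L Λ] [MulAction.IsPretransitive L Λ]
    (K : Subgroup L) [K.Normal]
    (hker : (rhoHom Λ L K).ker = K) (lam : Λ)
    (T : Set ↥(Sgrp Λ L K))
    (τ : ↥(Sgrp Λ L K) → ↥(Sgrp Λ L K))
    (hτT : ∀ s, τ s ∈ T) (hτcoset : ∀ s, s * (τ s)⁻¹ ∈ Sdel Λ L K lam)
    (hτuniq : ∀ s t, t ∈ T → s * t⁻¹ ∈ Sdel Λ L K lam → t = τ s)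
    (m : ℕ) :
    MonoidHom.ker ((Wr.fstHom (piHom Λ L K) m).comp (Asub Λ L K lam τ m).subtype) =
      (Subgroup.comap ((Wr.fstHom (piHom Λ L K) m).comp (Asub Λ L K lam τ m).subtype)
        (MulAction.stabilizer L lam)).normalCore ∧
    Nonempty
      (↥(MonoidHom.ker ((Wr.fstHom (piHom Λ L K) m).comp (Asub Λ L K lam τ m).subtype)) ≃*
        (Fin (Nat.card (MulAction.orbitRel.Quotient K Λ) * m) →
          ↥(K ⊓ MulAction.stabilizer L lam))) ∧
    ∃ e : (↥(Asub Λ L K lam τ m) ⧸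
        Subgroup.comap ((Wr.fstHom (piHom Λ L K) m).comp (Asub Λ L K lam τ m).subtype)
          (MulAction.stabilizer L lam)) ≃ Λ,
      ∀ (a : ↥(Asub Λ L K lam τ m))
        (x : ↥(Asub Λ L K lam τ m) ⧸
          Subgroup.comap ((Wr.fstHom (piHom Λ L K) m).comp (Asub Λ L K lam τ m).subtype)
            (MulAction.stabilizer L lam)),
        e (a • x) =
          ((Wr.fstHom (piHom Λ L K) m).comp (Asub Λ L K lam τ m).subtype) a • e x := by
  have hφ := Asub.fstHom_surjective Λ L K lam τ m hτT hτcoset hτuniq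
  refine ⟨MonoidHom.ker_eq_normalCore_comap_stabilizer hφ lam, ?_,
    exists_equiv_quotient_comap_stabilizer hφ lam⟩
  have : IsPretransitive (Sgrp Λ L K) (orbitRel.Quotient K Λ) := isPretransitive_Sgrp Λ L K
  have hcard : Nat.card (Fin m × T) = Nat.card (orbitRel.Quotient K Λ) * m := by
    rw [Nat.card_prod, Nat.card_fin, mul_comm,
      card_eq_of_transversal_stabilizer hτT hτcoset hτuniq]
  exact ⟨(Asub.kerMulEquiv Λ L K lam τ m hτT hτcoset hτuniq hker).trans
    (MulEquiv.arrowCongr (Finite.equivFinOfCardEq hcard) (MulEquiv.refl _))⟩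

/-- **Lemma.** With notation as in the construction, let `φ : A → L` be the projection,
`M = ker φ` and `C = {(g, f₁, …, f_m) ∈ A | g ∈ L_λ}`. Then `M` is the core of `C` in
`A`, `M ≅ K_λ^{|Δ|·m}`, and the action of `A` on the cosets of `C` is permutation
isomorphic to the action of `L` on `Λ` (via the bijection intertwining the `A`-action and
the `L`-action along `φ`). -/
theorem kernel_is_core_and_coset_action (Λ L : Type) [Fintype Λ] [Group L] [Finite L]
    [MulAction L Λ] [FaithfulSMul L Λ] [MulAction.IsPretransitive L Λ]
    (K : Subgroup L) [K.Normal] (hKint : ¬ MulAction.IsPretransitive ↥K Λ)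
    (hker : (rhoHom Λ L K).ker = K) (lam : Λ)
    (T : Set ↥(Sgrp Λ L K)) (h1T : (1 : ↥(Sgrp Λ L K)) ∈ T)
    (τ : ↥(Sgrp Λ L K) → ↥(Sgrp Λ L K))
    (hτT : ∀ s, τ s ∈ T) (hτcoset : ∀ s, s * (τ s)⁻¹ ∈ Sdel Λ L K lam)
    (hτuniq : ∀ s t, t ∈ T → s * t⁻¹ ∈ Sdel Λ L K lam → t = τ s)
    (m : ℕ) (hm : Odd m) :
    MonoidHom.ker ((Wr.fstHom (piHom Λ L K) m).comp (Asub Λ L K lam τ m).subtype) =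
      (Subgroup.comap ((Wr.fstHom (piHom Λ L K) m).comp (Asub Λ L K lam τ m).subtype)
        (MulAction.stabilizer L lam)).normalCore ∧
    Nonempty
      (↥(MonoidHom.ker ((Wr.fstHom (piHom Λ L K) m).comp (Asub Λ L K lam τ m).subtype)) ≃*
        (Fin (Nat.card (MulAction.orbitRel.Quotient K Λ) * m) →
          ↥(K ⊓ MulAction.stabilizer L lam))) ∧
    ∃ e : (↥(Asub Λ L K lam τ m) ⧸
        Subgroup.comap ((Wr.fstHom (piHom Λ L K) m).comp (Asub Λ L K lam τ m).subtype)
          (MulAction.stabilizer L lam)) ≃ Λ,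
      ∀ (a : ↥(Asub Λ L K lam τ m))
        (x : ↥(Asub Λ L K lam τ m) ⧸
          Subgroup.comap ((Wr.fstHom (piHom Λ L K) m).comp (Asub Λ L K lam τ m).subtype)
            (MulAction.stabilizer L lam)),
        e (a • x) =
          ((Wr.fstHom (piHom Λ L K) m).comp (Asub Λ L K lam τ m).subtype) a • e x :=
  kernel_is_core_and_coset_action_general Λ L K hker lam T τ hτT hτcoset hτuniq m
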